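/- arXiv:1911.09366 — 4 statements merged into one kernel-verified Lean document; each statement's English description precedes it below -/
import Mathlib

section
/- Â₁² + Â₂² = b·(J_n − I_n), where J_n is the n×n all-ones matrix. -/
open Matrix Kronecker Quaternion

/-- The permutation matrix of the 4-cycle (1,2,3,4). -/
def xD : Matrix (Fin 4) (Fin 4) ℚ := !![0,1,0,0; 0,0,1,0; 0,0,0,1; 1,0,0,0]

/-- The permutation matrix of (1,2)(3,4). -/
def yD : Matrix (Fin 4) (Fin 4) ℚ := !![0,1,0,0; 1,0,0,0; 0,0,0,1; 0,0,1,0]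

/-- `Â₁ := fromBlocks 0 𝟙 0 A₁` (all-ones row in the upper-right block). -/
def Ahat1 {n : ℕ} (A : Matrix (Fin (n - 1)) (Fin (n - 1)) ℚ) :
    Matrix (Fin 1 ⊕ Fin (n - 1)) (Fin 1 ⊕ Fin (n - 1)) ℚ :=
  Matrix.fromBlocks 0 (Matrix.of fun _ _ => 1) 0 A

/-- `Â₂ := fromBlocks 0 0 𝟙 A₂` (all-ones column in the lower-left block). -/
def Ahat2 {n : ℕ} (A : Matrix (Fin (n - 1)) (Fin (n - 1)) ℚ) :
    Matrix (Fin 1 ⊕ Fin (n - 1)) (Fin 1 ⊕ Fin (n - 1)) ℚ :=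
  Matrix.fromBlocks 0 0 (Matrix.of fun _ _ => 1) A

/-- `σ_k := I_n ⊗ k`. -/
def sig (n : ℕ) (k : Matrix (Fin 4) (Fin 4) ℚ) :
    Matrix ((Fin 1 ⊕ Fin (n - 1)) × Fin 4) ((Fin 1 ⊕ Fin (n - 1)) × Fin 4) ℚ :=
  (1 : Matrix (Fin 1 ⊕ Fin (n - 1)) (Fin 1 ⊕ Fin (n - 1)) ℚ) ⊗ₖ k

/-- `τ_g := Â₁ ⊗ g + Â₂ ⊗ (g·x²)`. -/
def tau {n : ℕ} (A₁ : Matrix (Fin (n - 1)) (Fin (n - 1)) ℚ) (g : Matrix (Fin 4) (Fin 4) ℚ) :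
    Matrix ((Fin 1 ⊕ Fin (n - 1)) × Fin 4) ((Fin 1 ⊕ Fin (n - 1)) × Fin 4) ℚ :=
  Ahat1 A₁ ⊗ₖ g + Ahat2 A₁ᵀ ⊗ₖ (g * xD ^ 2)

/-! Compute the squares blockwise. The off-diagonal blocks of `Â₁²` and `Â₂²` are the column sums
of `A₁`; since `A₁ + A₁ᵀ = J - I`, a column sum is `(n - 2) - b`, which is `b` again. The lower-right
block is `A₁² + A₂² = b • (A₁ + A₂) = b • (J - I)` by the two scheme relations for the squares. -/

namespace Matrix

variable {m ι o R : Type*} [DecidableEq ι] [CommRing R]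

lemma ones_mul_eq_smul_ones_of_add_transpose [Fintype ι] {A : Matrix ι ι R} {r : R}
    (hsum : A + Aᵀ = of (fun _ _ => 1) - 1) (hrow : ∀ i, ∑ j, A i j = r) :
    (of fun _ _ => 1 : Matrix m ι R) * A = ((Fintype.card ι : R) - 1 - r) • of fun _ _ => 1 := by
  ext i j
  have hpair : ∑ k, (A k j + A j k) = (Fintype.card ι : R) - 1 := by
    simpa [one_apply] using congr_arg (fun M => ∑ k, M k j) hsum
  rw [Finset.sum_add_distrib, hrow] at hpair
  simp [mul_apply, ← hpair]

lemma transpose_mul_ones_eq_smul_ones_of_add_transpose [Fintype ι] {A : Matrix ι ι R} {r : R}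
    (hsum : A + Aᵀ = of (fun _ _ => 1) - 1) (hrow : ∀ i, ∑ j, A i j = r) :
    Aᵀ * (of fun _ _ => 1 : Matrix ι m R) = ((Fintype.card ι : R) - 1 - r) • of fun _ _ => 1 := by
  ext i j
  simpa [mul_apply, mul_comm] using
    congr_fun₂ (ones_mul_eq_smul_ones_of_add_transpose (m := m) hsum hrow) j i

lemma ones_sub_one_eq_fromBlocks [Unique o] [DecidableEq o] :
    (of fun _ _ => 1 : Matrix (o ⊕ ι) (o ⊕ ι) R) - 1
      = fromBlocks 0 (of fun _ _ => 1) (of fun _ _ => 1) (of (fun _ _ => 1) - 1) := by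
  ext (i | i) (j | j) <;> simp [one_apply, Unique.eq_default]

end Matrix

open Matrix

lemma Ahat1_mul_self {n : ℕ} (A : Matrix (Fin (n - 1)) (Fin (n - 1)) ℚ) :
    Ahat1 A * Ahat1 A
      = fromBlocks 0 ((of fun _ _ => 1 : Matrix (Fin 1) (Fin (n - 1)) ℚ) * A) 0 (A * A) := by
  simp [Ahat1, fromBlocks_multiply]

lemma Ahat2_mul_self {n : ℕ} (A : Matrix (Fin (n - 1)) (Fin (n - 1)) ℚ) :
    Ahat2 A * Ahat2 A
      = fromBlocks 0 0 (A * (of fun _ _ => 1 : Matrix (Fin (n - 1)) (Fin 1) ℚ)) (A * A) := by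
  simp [Ahat2, fromBlocks_multiply]

theorem stmt_10_general (n : ℕ) (hn : 4 ≤ n) (b : ℚ) (hb : b = ((n : ℚ) - 2) / 2)
    (A₁ : Matrix (Fin (n - 1)) (Fin (n - 1)) ℚ)
    (hsum : A₁ + A₁ᵀ = (Matrix.of fun _ _ => (1 : ℚ)) - 1)
    (hrow : ∀ i, ∑ j, A₁ i j = b)
    (h11 : A₁ * A₁ = ((b - 1) / 2) • A₁ + ((b + 1) / 2) • A₁ᵀ)
    (h22 : A₁ᵀ * A₁ᵀ = ((b + 1) / 2) • A₁ + ((b - 1) / 2) • A₁ᵀ) :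
    Ahat1 A₁ * Ahat1 A₁ + Ahat2 A₁ᵀ * Ahat2 A₁ᵀ
      = b • ((Matrix.of fun _ _ => 1) - (1 : Matrix (Fin 1 ⊕ Fin (n - 1)) (Fin 1 ⊕ Fin (n - 1)) ℚ)) := by
  have hcol : (Fintype.card (Fin (n - 1)) : ℚ) - 1 - b = b := by
    rw [Fintype.card_fin, Nat.cast_sub (by omega), hb]
    push_cast
    ring
  have hsq : A₁ * A₁ + A₁ᵀ * A₁ᵀ = b • (A₁ + A₁ᵀ) := by
    rw [h11, h22]
    module
  rw [Ahat1_mul_self, Ahat2_mul_self, ones_mul_eq_smul_ones_of_add_transpose hsum hrow,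
    transpose_mul_ones_eq_smul_ones_of_add_transpose hsum hrow, hcol, fromBlocks_add, hsq, hsum,
    ones_sub_one_eq_fromBlocks, fromBlocks_smul]
  simp

theorem stmt_10 (n : ℕ) (hn : 4 ≤ n) (a b : ℚ)
    (ha : a = (n : ℚ) - 1) (hb : b = ((n : ℚ) - 2) / 2)
    (A₁ : Matrix (Fin (n - 1)) (Fin (n - 1)) ℚ)
    (h01 : ∀ i j, A₁ i j = 0 ∨ A₁ i j = 1)
    (hdiag : ∀ i, A₁ i i = 0)
    (hns : A₁ ≠ A₁ᵀ)
    (hsum : A₁ + A₁ᵀ = (Matrix.of fun _ _ => (1 : ℚ)) - 1)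
    (hrow : ∀ i, ∑ j, A₁ i j = b)
    (h11 : A₁ * A₁ = ((b - 1) / 2) • A₁ + ((b + 1) / 2) • A₁ᵀ)
    (h22 : A₁ᵀ * A₁ᵀ = ((b + 1) / 2) • A₁ + ((b - 1) / 2) • A₁ᵀ)
    (h12 : A₁ * A₁ᵀ = b • (1 : Matrix (Fin (n - 1)) (Fin (n - 1)) ℚ)
      + ((b - 1) / 2) • A₁ + ((b - 1) / 2) • A₁ᵀ)
    (h21 : A₁ᵀ * A₁ = b • (1 : Matrix (Fin (n - 1)) (Fin (n - 1)) ℚ)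
      + ((b - 1) / 2) • A₁ + ((b - 1) / 2) • A₁ᵀ) :
    Ahat1 A₁ * Ahat1 A₁ + Ahat2 A₁ᵀ * Ahat2 A₁ᵀ
      = b • ((Matrix.of fun _ _ => 1) - (1 : Matrix (Fin 1 ⊕ Fin (n - 1)) (Fin 1 ⊕ Fin (n - 1)) ℚ)) :=
  stmt_10_general n hn b hb A₁ hsum hrow h11 h22
end

section
/- Â₁·Â₂ + Â₂·Â₁ = b·J_n + (a−b)·I_n, where J_n is the n×n all-ones matrix. -/
open Matrix Kronecker Quaternion

/-! Multiplying the blocks, `Â₁Â₂ + Â₂Â₁ = [[n-1, b𝟙ᵀ], [b𝟙, A₁A₂ + A₂A₁ + J]]`, since every row of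
`A₁` sums to `b`. The scheme relations give `A₁A₂ + A₂A₁ = 2b·I + (b-1)(A₁ + A₂)`,
and `A₁ + A₂ = J - I` turns the lower right block into `(b+1)·I + b·J`; finally `a - b = b + 1`. -/

section

variable {l m n o R : Type*} [Semiring R]

theorem of_one_eq_fromBlocks :
    (of fun _ _ => 1 : Matrix (l ⊕ m) (n ⊕ o) R)
      = fromBlocks (of fun _ _ => 1) (of fun _ _ => 1) (of fun _ _ => 1) (of fun _ _ => 1) := by
  ext (i | i) (j | j) <;> rfl

variable [Fintype m]

theorem mul_of_one_eq_smul_of_rowSum {A : Matrix n m R} {b : R} (hA : ∀ i, ∑ j, A i j = b) :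
    A * (of fun _ _ => 1 : Matrix m o R) = b • of fun _ _ => 1 := by
  ext i k
  simp [mul_apply, hA]

theorem of_one_mul_eq_smul_of_colSum {B : Matrix m n R} {b : R} (hB : ∀ j, ∑ i, B i j = b) :
    (of fun _ _ => 1 : Matrix o m R) * B = b • of fun _ _ => 1 := by
  ext k j
  simp [mul_apply, hB]

theorem of_one_mul_of_one :
    (of fun _ _ => 1 : Matrix l m R) * (of fun _ _ => 1 : Matrix m n R)
      = (Fintype.card m : R) • of fun _ _ => 1 := by
  ext i k
  simp [mul_apply]

theorem fromBlocks_ones_anticomm [Fintype o] {A B : Matrix m m R} {b : R}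
    (hA : ∀ i, ∑ j, A i j = b) (hB : ∀ j, ∑ i, B i j = b) :
    fromBlocks (0 : Matrix o o R) (of fun _ _ => 1) 0 A * fromBlocks 0 0 (of fun _ _ => 1) B
      + fromBlocks 0 0 (of fun _ _ => 1) B * fromBlocks (0 : Matrix o o R) (of fun _ _ => 1) 0 A
      = fromBlocks ((Fintype.card m : R) • of fun _ _ => 1) (b • of fun _ _ => 1)
          (b • of fun _ _ => 1) (A * B + B * A + (Fintype.card o : R) • of fun _ _ => 1) := by
  simp only [fromBlocks_multiply, fromBlocks_add, of_one_mul_of_one,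
    mul_of_one_eq_smul_of_rowSum hA, of_one_mul_eq_smul_of_colSum hB, Matrix.zero_mul,
    Matrix.mul_zero, zero_add, add_zero]
  congr 1
  abel

end

section

variable {m R : Type*} [Fintype m] [DecidableEq m] [CommRing R]

theorem mul_transpose_add_transpose_mul {A : Matrix m m R} {b c : R}
    (hsum : A + Aᵀ = (of fun _ _ => 1) - 1)
    (h12 : A * Aᵀ = b • 1 + c • A + c • Aᵀ) (h21 : Aᵀ * A = b • 1 + c • A + c • Aᵀ) :
    A * Aᵀ + Aᵀ * A = (2 * b - 2 * c) • 1 + (2 * c) • of fun _ _ => 1 := by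
  rw [h12, h21, eq_sub_of_add_eq' hsum]
  module

end

theorem stmt_11_general (n : ℕ) (hn : 4 ≤ n) (a b : ℚ)
    (ha : a = (n : ℚ) - 1) (hb : b = ((n : ℚ) - 2) / 2)
    (A₁ : Matrix (Fin (n - 1)) (Fin (n - 1)) ℚ)
    (hsum : A₁ + A₁ᵀ = (Matrix.of fun _ _ => (1 : ℚ)) - 1)
    (hrow : ∀ i, ∑ j, A₁ i j = b)
    (h12 : A₁ * A₁ᵀ = b • (1 : Matrix (Fin (n - 1)) (Fin (n - 1)) ℚ)
      + ((b - 1) / 2) • A₁ + ((b - 1) / 2) • A₁ᵀ)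
    (h21 : A₁ᵀ * A₁ = b • (1 : Matrix (Fin (n - 1)) (Fin (n - 1)) ℚ)
      + ((b - 1) / 2) • A₁ + ((b - 1) / 2) • A₁ᵀ) :
    Ahat1 A₁ * Ahat2 A₁ᵀ + Ahat2 A₁ᵀ * Ahat1 A₁
      = b • (Matrix.of fun _ _ => 1)
        + (a - b) • (1 : Matrix (Fin 1 ⊕ Fin (n - 1)) (Fin 1 ⊕ Fin (n - 1)) ℚ) := by
  have hab : a - b = b + 1 := by rw [ha, hb]; ring
  have hcard : (Fintype.card (Fin (n - 1)) : ℚ) = a := by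
    rw [Fintype.card_fin, Nat.cast_sub (by omega), ha, Nat.cast_one]
  rw [Ahat1, Ahat2, fromBlocks_ones_anticomm (B := A₁ᵀ) hrow hrow,
    mul_transpose_add_transpose_mul hsum h12 h21, of_one_eq_fromBlocks, ← fromBlocks_one,
    fromBlocks_smul, fromBlocks_smul, fromBlocks_add, hcard, hab, fromBlocks_inj]
  refine ⟨?_, by simp, by simp, ?_⟩
  · ext i j
    simp only [Subsingleton.elim i j, Matrix.smul_apply, of_apply, smul_eq_mul, mul_one,
      Matrix.add_apply, one_apply_eq]
    linarith
  · rw [Fintype.card_fin, Nat.cast_one]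
    module

theorem stmt_11 (n : ℕ) (hn : 4 ≤ n) (a b : ℚ)
    (ha : a = (n : ℚ) - 1) (hb : b = ((n : ℚ) - 2) / 2)
    (A₁ : Matrix (Fin (n - 1)) (Fin (n - 1)) ℚ)
    (h01 : ∀ i j, A₁ i j = 0 ∨ A₁ i j = 1)
    (hdiag : ∀ i, A₁ i i = 0)
    (hns : A₁ ≠ A₁ᵀ)
    (hsum : A₁ + A₁ᵀ = (Matrix.of fun _ _ => (1 : ℚ)) - 1)
    (hrow : ∀ i, ∑ j, A₁ i j = b)
    (h11 : A₁ * A₁ = ((b - 1) / 2) • A₁ + ((b + 1) / 2) • A₁ᵀ)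
    (h22 : A₁ᵀ * A₁ᵀ = ((b + 1) / 2) • A₁ + ((b - 1) / 2) • A₁ᵀ)
    (h12 : A₁ * A₁ᵀ = b • (1 : Matrix (Fin (n - 1)) (Fin (n - 1)) ℚ)
      + ((b - 1) / 2) • A₁ + ((b - 1) / 2) • A₁ᵀ)
    (h21 : A₁ᵀ * A₁ = b • (1 : Matrix (Fin (n - 1)) (Fin (n - 1)) ℚ)
      + ((b - 1) / 2) • A₁ + ((b - 1) / 2) • A₁ᵀ) :
    Ahat1 A₁ * Ahat2 A₁ᵀ + Ahat2 A₁ᵀ * Ahat1 A₁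
      = b • (Matrix.of fun _ _ => 1)
        + (a - b) • (1 : Matrix (Fin 1 ⊕ Fin (n - 1)) (Fin 1 ⊕ Fin (n - 1)) ℚ) :=
  stmt_11_general n hn a b ha hb A₁ hsum hrow h12 h21
end

section
/- For all g, g' ∈ G∖K, τ_g·τ_{g'} = a·σ_{g·g'·x²} + b·τ_{g·g'·x·y} + b·τ_{g·g'·x³·y} (note g·g'·x² ∈ K and g·g'·x·y, g·g'·x³·y ∈ G∖K). -/
open Matrix Kronecker Quaternion

/-! Since `x²` is an involution commuting with every `g' ∈ G∖K`, the product
`(P ⊗ g + Q ⊗ g x²)(P ⊗ g' + Q ⊗ g' x²)` equals `(P² + Q²) ⊗ gg' + (PQ + QP) ⊗ gg'x²`.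
For `P = Â₁`, `Q = Â₂` the scheme relations and the row and column sums `b` give
`Â₁² + Â₂² = b(Â₁ + Â₂)` and `Â₁Â₂ + Â₂Â₁ = a I + b(Â₁ + Â₂)`. Finally the identity
`1 + x² = xy + x³y` of permutation matrices (false in the group algebra of `D₈`) rewrites
`(Â₁ + Â₂) ⊗ gg'(1 + x²)` as `τ_{gg'xy} + τ_{gg'x³y}`. -/

section TwistedKronecker

variable {R l m : Type*} [CommRing R] [Fintype l] [DecidableEq l] [Fintype m]

theorem kronecker_add_kronecker_mul_right_mul
    (P Q : Matrix m m R) {u g' : Matrix l l R} (hu : u * u = 1) (hg' : Commute u g')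
    (g : Matrix l l R) :
    (P ⊗ₖ g + Q ⊗ₖ (g * u)) * (P ⊗ₖ g' + Q ⊗ₖ (g' * u)) =
      (P * P + Q * Q) ⊗ₖ (g * g') + (P * Q + Q * P) ⊗ₖ (g * g' * u) := by
  have hmid : g * u * g' = g * g' * u := by rw [mul_assoc, hg'.eq, ← mul_assoc]
  have hcorner : g * g' * u * u = g * g' := by rw [mul_assoc, hu, mul_one]
  simp only [add_mul, mul_add, ← mul_kronecker_mul, ← mul_assoc, hmid, hcorner, add_kronecker]
  abel

end TwistedKronecker

section Dihedral

theorem xD_sq_mul_xD_sq : xD ^ 2 * xD ^ 2 = 1 := by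
  simp [xD, sq, ← Matrix.ext_iff, Fin.forall_fin_succ, Matrix.one_apply]

theorem commute_xD_sq_yD : Commute (xD ^ 2) yD := by
  simp [Commute, SemiconjBy, xD, yD, sq]

theorem one_add_xD_sq : 1 + xD ^ 2 = xD * yD + xD ^ 3 * yD := by
  simp [xD, yD, pow_succ, ← Matrix.ext_iff, Fin.forall_fin_succ, Matrix.one_apply]

theorem commute_xD_sq_of_mem {g : Matrix (Fin 4) (Fin 4) ℚ}
    (hg : g ∈ ({yD, xD * yD, xD ^ 2 * yD, xD ^ 3 * yD} : Set (Matrix (Fin 4) (Fin 4) ℚ))) :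
    Commute (xD ^ 2) g := by
  obtain ⟨j, rfl⟩ : ∃ j : ℕ, g = xD ^ j * yD := by
    rcases hg with rfl | rfl | rfl | rfl
    exacts [⟨0, by rw [pow_zero, one_mul]⟩, ⟨1, by rw [pow_one]⟩, ⟨2, rfl⟩, ⟨3, rfl⟩]
  exact (Commute.pow_pow_self xD 2 j).mul_right commute_xD_sq_yD

end Dihedral

theorem tau_mul_tau {n : ℕ} (A : Matrix (Fin (n - 1)) (Fin (n - 1)) ℚ)
    (g : Matrix (Fin 4) (Fin 4) ℚ) {g' : Matrix (Fin 4) (Fin 4) ℚ} (hg' : Commute (xD ^ 2) g') :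
    tau A g * tau A g' =
      (Ahat1 A * Ahat1 A + Ahat2 Aᵀ * Ahat2 Aᵀ) ⊗ₖ (g * g')
        + (Ahat1 A * Ahat2 Aᵀ + Ahat2 Aᵀ * Ahat1 A) ⊗ₖ (g * g' * xD ^ 2) :=
  kronecker_add_kronecker_mul_right_mul _ _ xD_sq_mul_xD_sq hg' g

theorem tau_add_tau_mul_xD_sq {n : ℕ} (A : Matrix (Fin (n - 1)) (Fin (n - 1)) ℚ)
    (h : Matrix (Fin 4) (Fin 4) ℚ) :
    tau A h + tau A (h * xD ^ 2) = (Ahat1 A + Ahat2 Aᵀ) ⊗ₖ (h + h * xD ^ 2) := by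
  rw [tau, tau, mul_assoc, xD_sq_mul_xD_sq, mul_one, add_kronecker, kronecker_add,
    kronecker_add]
  abel

section AllOnes

variable {R ι o : Type*} [CommRing R] [Fintype ι] {A : Matrix ι ι R} {b : R}

theorem ones_mul_eq_smul_ones (hcol : ∀ j, ∑ i, A i j = b) :
    (of fun _ _ => (1 : R) : Matrix o ι R) * A = b • of fun _ _ => 1 := by
  ext i j; simp [Matrix.mul_apply, hcol]

theorem mul_ones_eq_smul_ones (hrow : ∀ i, ∑ j, A i j = b) :
    A * (of fun _ _ => (1 : R) : Matrix ι o R) = b • of fun _ _ => 1 := by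
  ext i j; simp [Matrix.mul_apply, hrow]

theorem sum_apply_col_of_add_transpose_eq [DecidableEq ι]
    (hsum : A + Aᵀ = (of fun _ _ => (1 : R)) - 1) (hrow : ∀ i, ∑ j, A i j = b) (j : ι) :
    ∑ i, A i j = Fintype.card ι - 1 - b := by
  have hpair : ∀ i, A i j = ((of fun _ _ => (1 : R)) - 1) j i - A j i := fun i => by
    rw [← hsum]; simp
  simp [hpair, Finset.sum_sub_distrib, hrow, Matrix.one_apply]

end AllOnes

section Cone

variable {n : ℕ} {A : Matrix (Fin (n - 1)) (Fin (n - 1)) ℚ} {b : ℚ}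

theorem Ahat1_mul_Ahat1_add_Ahat2_mul_Ahat2 (hcol : ∀ j, ∑ i, A i j = b)
    (h11 : A * A = ((b - 1) / 2) • A + ((b + 1) / 2) • Aᵀ)
    (h22 : Aᵀ * Aᵀ = ((b + 1) / 2) • A + ((b - 1) / 2) • Aᵀ) :
    Ahat1 A * Ahat1 A + Ahat2 Aᵀ * Ahat2 Aᵀ = b • (Ahat1 A + Ahat2 Aᵀ) := by
  simp only [Ahat1, Ahat2, fromBlocks_multiply, fromBlocks_add, fromBlocks_smul,
    ones_mul_eq_smul_ones hcol, mul_ones_eq_smul_ones (A := Aᵀ) hcol, h11, h22,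
    Matrix.zero_mul, Matrix.mul_zero, add_zero, zero_add, smul_zero]
  congr 1
  module

theorem Ahat1_mul_Ahat2_add_Ahat2_mul_Ahat1 (hsum : A + Aᵀ = (of fun _ _ => (1 : ℚ)) - 1)
    (hrow : ∀ i, ∑ j, A i j = b) (hcard : ((n - 1 : ℕ) : ℚ) = 2 * b + 1)
    (h12 : A * Aᵀ = b • (1 : Matrix (Fin (n - 1)) (Fin (n - 1)) ℚ)
      + ((b - 1) / 2) • A + ((b - 1) / 2) • Aᵀ)
    (h21 : Aᵀ * A = b • (1 : Matrix (Fin (n - 1)) (Fin (n - 1)) ℚ)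
      + ((b - 1) / 2) • A + ((b - 1) / 2) • Aᵀ) :
    Ahat1 A * Ahat2 Aᵀ + Ahat2 Aᵀ * Ahat1 A
      = (2 * b + 1) • (1 : Matrix (Fin 1 ⊕ Fin (n - 1)) (Fin 1 ⊕ Fin (n - 1)) ℚ)
        + b • (Ahat1 A + Ahat2 Aᵀ) := by
  have hones : (of fun _ _ => (1 : ℚ) : Matrix (Fin (n - 1)) (Fin 1) ℚ)
      * (of fun _ _ => (1 : ℚ) : Matrix (Fin 1) (Fin (n - 1)) ℚ) = A + Aᵀ + 1 := by
    rw [hsum, sub_add_cancel]; ext; simp [Matrix.mul_apply]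
  have hcount : (of fun _ _ => (1 : ℚ) : Matrix (Fin 1) (Fin (n - 1)) ℚ)
      * (of fun _ _ => (1 : ℚ) : Matrix (Fin (n - 1)) (Fin 1) ℚ)
      = (2 * b + 1) • (1 : Matrix (Fin 1) (Fin 1) ℚ) := by
    ext i j; simp [Matrix.mul_apply, hcard, Subsingleton.elim i j]
  simp only [Ahat1, Ahat2, ← fromBlocks_one, fromBlocks_multiply, fromBlocks_add,
    fromBlocks_smul, mul_ones_eq_smul_ones hrow, ones_mul_eq_smul_ones (A := Aᵀ) hrow, hones,
    hcount, h12, h21, Matrix.zero_mul, Matrix.mul_zero, add_zero, zero_add, smul_zero]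
  congr 1
  module

end Cone

theorem stmt_14_general (n : ℕ) (hn : 4 ≤ n) (a b : ℚ)
    (ha : a = (n : ℚ) - 1) (hb : b = ((n : ℚ) - 2) / 2)
    (A₁ : Matrix (Fin (n - 1)) (Fin (n - 1)) ℚ)
    (hsum : A₁ + A₁ᵀ = (Matrix.of fun _ _ => (1 : ℚ)) - 1)
    (hrow : ∀ i, ∑ j, A₁ i j = b)
    (h11 : A₁ * A₁ = ((b - 1) / 2) • A₁ + ((b + 1) / 2) • A₁ᵀ)
    (h22 : A₁ᵀ * A₁ᵀ = ((b + 1) / 2) • A₁ + ((b - 1) / 2) • A₁ᵀ)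
    (h12 : A₁ * A₁ᵀ = b • (1 : Matrix (Fin (n - 1)) (Fin (n - 1)) ℚ)
      + ((b - 1) / 2) • A₁ + ((b - 1) / 2) • A₁ᵀ)
    (h21 : A₁ᵀ * A₁ = b • (1 : Matrix (Fin (n - 1)) (Fin (n - 1)) ℚ)
      + ((b - 1) / 2) • A₁ + ((b - 1) / 2) • A₁ᵀ) :
    ∀ g ∈ ({yD, xD * yD, xD ^ 2 * yD, xD ^ 3 * yD} : Set (Matrix (Fin 4) (Fin 4) ℚ)),
      ∀ g' ∈ ({yD, xD * yD, xD ^ 2 * yD, xD ^ 3 * yD} : Set (Matrix (Fin 4) (Fin 4) ℚ)),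
      tau A₁ g * tau A₁ g' = a • sig n (g * g' * xD ^ 2)
        + b • tau A₁ (g * g' * xD * yD) + b • tau A₁ (g * g' * xD ^ 3 * yD) := by
  intro g _ g' hg'
  have hcard : ((n - 1 : ℕ) : ℚ) = 2 * b + 1 := by
    rw [Nat.cast_sub (by omega), hb]; push_cast; ring
  have hcol : ∀ j, ∑ i, A₁ i j = b := fun j => by
    rw [sum_apply_col_of_add_transpose_eq hsum hrow, Fintype.card_fin, hcard]; ring
  have hturn : g * g' * xD * yD * xD ^ 2 = g * g' * xD ^ 3 * yD := by
    rw [mul_assoc _ yD, ← commute_xD_sq_yD.eq, ← mul_assoc, mul_assoc (g * g') xD, ← pow_succ']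
  have hsplit : g * g' + g * g' * xD ^ 2 = g * g' * xD * yD + g * g' * xD ^ 3 * yD := by
    rw [← mul_one_add, one_add_xD_sq, mul_add]
    simp only [mul_assoc]
  rw [tau_mul_tau A₁ g (commute_xD_sq_of_mem hg'), Ahat1_mul_Ahat1_add_Ahat2_mul_Ahat2 hcol h11 h22,
    Ahat1_mul_Ahat2_add_Ahat2_mul_Ahat1 hsum hrow hcard h12 h21, ← hturn, add_assoc,
    ← smul_add, tau_add_tau_mul_xD_sq, hturn, ← hsplit, show a = 2 * b + 1 by rw [ha, hb]; ring]
  simp only [sig, add_kronecker, kronecker_add, smul_kronecker, smul_add]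
  abel

theorem stmt_14 (n : ℕ) (hn : 4 ≤ n) (a b : ℚ)
    (ha : a = (n : ℚ) - 1) (hb : b = ((n : ℚ) - 2) / 2)
    (A₁ : Matrix (Fin (n - 1)) (Fin (n - 1)) ℚ)
    (h01 : ∀ i j, A₁ i j = 0 ∨ A₁ i j = 1)
    (hdiag : ∀ i, A₁ i i = 0)
    (hns : A₁ ≠ A₁ᵀ)
    (hsum : A₁ + A₁ᵀ = (Matrix.of fun _ _ => (1 : ℚ)) - 1)
    (hrow : ∀ i, ∑ j, A₁ i j = b)
    (h11 : A₁ * A₁ = ((b - 1) / 2) • A₁ + ((b + 1) / 2) • A₁ᵀ)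
    (h22 : A₁ᵀ * A₁ᵀ = ((b + 1) / 2) • A₁ + ((b - 1) / 2) • A₁ᵀ)
    (h12 : A₁ * A₁ᵀ = b • (1 : Matrix (Fin (n - 1)) (Fin (n - 1)) ℚ)
      + ((b - 1) / 2) • A₁ + ((b - 1) / 2) • A₁ᵀ)
    (h21 : A₁ᵀ * A₁ = b • (1 : Matrix (Fin (n - 1)) (Fin (n - 1)) ℚ)
      + ((b - 1) / 2) • A₁ + ((b - 1) / 2) • A₁ᵀ) :
    ∀ g ∈ ({yD, xD * yD, xD ^ 2 * yD, xD ^ 3 * yD} : Set (Matrix (Fin 4) (Fin 4) ℚ)),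
      ∀ g' ∈ ({yD, xD * yD, xD ^ 2 * yD, xD ^ 3 * yD} : Set (Matrix (Fin 4) (Fin 4) ℚ)),
      tau A₁ g * tau A₁ g' = a • sig n (g * g' * xD ^ 2)
        + b • tau A₁ (g * g' * xD * yD) + b • tau A₁ (g * g' * xD ^ 3 * yD) :=
  stmt_14_general n hn a b ha hb A₁ hsum hrow h11 h22 h12 h21
end

section
/- There is a surjective ℂ-algebra homomorphism T' from the ℂ-subalgebra of 4n×4n complex matrices spanned by the eight matrices σ_1, σ_x, σ_{x²}, σ_{x³}, τ_y, τ_{xy}, τ_{x²y}, τ_{x³y} (regarded as complex matrices) onto M₂(ℂ) satisfying T'(σ_1) = I₂, T'(σ_x) = [[i,0],[0,−i]] (i = √−1), and T'(τ_y) = [[0,−1],[a,0]] (this is the irreducible 2-dimensional representation of 𝒬). -/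
/-!
Let `∞` be the added vertex and `v = (i^k)_k` the eigenvector of the 4-cycle `x` for the
eigenvalue `i`. The plane spanned by `e_∞ ⊗ v` and `-(1/a) 𝟙 ⊗ y v` is invariant under all eight
generators. For the `σ_k` this is clear. Since `x²` acts as `-1` on `span(v, y v)`, `τ_g` acts on
the plane as `(Â₁ - Â₂) ⊗ g`, and `Â₁ - Â₂` preserves `span(e_∞, 𝟙)` because `A₁` and `A₂ = A₁ᵀ`
have the same row sums. Compressing to this plane is an algebra homomorphism to `M₂(ℂ)`; it is
onto because the images `diag(i, -i)` of `σ_x` and `[[0, -1], [a, 0]]` of `τ_y` generate `M₂(ℂ)`.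
-/

open Matrix Kronecker Quaternion

noncomputable section

namespace Matrix

variable {K : Type*} [CommRing K]

section Compression

variable {N ι : Type*} [Fintype N] [Fintype ι] [DecidableEq ι] {V : Matrix N ι K}
  {W : Matrix ι N K}

lemma mul_mul_eq_of_mul_eq (hWV : W * V = 1) {M : Matrix N N K} {ρ : Matrix ι ι K}
    (h : M * V = V * ρ) : W * M * V = ρ := by
  rw [Matrix.mul_assoc, h, ← Matrix.mul_assoc, hWV, Matrix.one_mul]

variable [DecidableEq N] (V W) (hWV : W * V = 1)

/-- For a left inverse `W` of `V`, the matrices leaving the column space of `V` invariant: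
`W * M * V` is then the matrix of `M` restricted to that space, in the basis of columns of `V`. -/
def compressionSubalgebra : Subalgebra K (Matrix N N K) where
  carrier := {M | M * V = V * (W * M * V)}
  mul_mem' {M M'} hM hM' := by
    simp only [Set.mem_ofPred_eq, Matrix.mul_assoc] at hM hM' ⊢
    rw [hM', ← Matrix.mul_assoc M V, hM]
    simp only [Matrix.mul_assoc]
    rw [← Matrix.mul_assoc W V, hWV, Matrix.one_mul]
  add_mem' {M M'} hM hM' := by
    simp only [Set.mem_ofPred_eq] at hM hM' ⊢
    rw [Matrix.add_mul, hM, hM', Matrix.mul_add, Matrix.add_mul, Matrix.mul_add]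
  algebraMap_mem' r := by
    simp [Algebra.algebraMap_eq_smul_one, hWV]

def compressionHom : compressionSubalgebra V W hWV →ₐ[K] Matrix ι ι K where
  toFun M := W * (M : Matrix N N K) * V
  map_one' := by simp [hWV]
  map_mul' M M' := by
    obtain ⟨M, -⟩ := M
    obtain ⟨M', hM'⟩ := M'
    change W * (M * M') * V = W * M * V * (W * M' * V)
    rw [Matrix.mul_assoc W, Matrix.mul_assoc M, hM']
    simp only [Matrix.mul_assoc]
  map_zero' := by simp
  map_add' M M' := by simp [Matrix.mul_add, Matrix.add_mul]
  commutes' r := by simp [Algebra.algebraMap_eq_smul_one, hWV]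

variable {V W}

lemma mem_compressionSubalgebra_of_mul_eq {M : Matrix N N K} {ρ : Matrix ι ι K}
    (h : M * V = V * ρ) : M ∈ compressionSubalgebra V W hWV := by
  show M * V = V * (W * M * V)
  rw [mul_mul_eq_of_mul_eq hWV h, h]

end Compression

section KhatriRao

variable {l m n ι κ : Type*}

/-- The column-wise Kronecker product. -/
def khatriRao (U : Matrix m ι K) (F : Matrix n ι K) : Matrix (m × n) ι K :=
  of fun pk c => U pk.1 c * F pk.2 c

lemma kronecker_mul_khatriRao [Fintype m] [Fintype n] (P : Matrix l m K) (Q : Matrix κ n K)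
    (U : Matrix m ι K) (F : Matrix n ι K) :
    (P ⊗ₖ Q) * khatriRao U F = khatriRao (P * U) (Q * F) := by
  ext ⟨p, k⟩ c
  simp only [khatriRao, mul_apply, of_apply, kroneckerMap_apply, Fintype.sum_prod_type,
    Finset.sum_mul_sum]
  exact Finset.sum_congr rfl fun q _ => Finset.sum_congr rfl fun l _ => by ring

lemma khatriRao_mul_diagonal [Fintype ι] [DecidableEq ι] (U : Matrix m ι K) (F : Matrix n ι K)
    (d : ι → K) : khatriRao U (F * diagonal d) = khatriRao U F * diagonal d := by
  ext pk c
  simp [khatriRao, mul_assoc]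

lemma khatriRao_mul_mul [Fintype ι] (U : Matrix m ι K) (F : Matrix n ι K) (X Y : Matrix ι ι K)
    (h : ∀ c i j, i ≠ j → X i c * Y j c = 0) :
    khatriRao (U * X) (F * Y) = khatriRao U F * (X ⊙ Y) := by
  ext ⟨p, k⟩ c
  simp only [khatriRao, mul_apply, of_apply, hadamard_apply, Finset.sum_mul_sum]
  refine Finset.sum_congr rfl fun i _ => ?_
  rw [Finset.sum_eq_single i (fun j _ hji => by rw [mul_mul_mul_comm, h c i j hji.symm, mul_zero])
    (by simp)]
  ring

lemma transpose_khatriRao_mul_khatriRao [Fintype m] [Fintype n] (P U : Matrix m ι K)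
    (Q F : Matrix n ι K) : (khatriRao P Q)ᵀ * khatriRao U F = (Pᵀ * U) ⊙ (Qᵀ * F) := by
  ext c d
  simp only [khatriRao, mul_apply, transpose_apply, of_apply, hadamard_apply,
    Fintype.sum_prod_type, Finset.sum_mul_sum]
  exact Finset.sum_congr rfl fun q _ => Finset.sum_congr rfl fun l _ => by ring

lemma khatriRao_sub_khatriRao (U U' : Matrix m ι K) (F : Matrix n ι K) :
    khatriRao U F - khatriRao U' F = khatriRao (U - U') F := by
  ext pk c
  simp [khatriRao, sub_mul]

lemma khatriRao_neg_right (U : Matrix m ι K) (F : Matrix n ι K) :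
    khatriRao U (-F) = -khatriRao U F := by
  ext pk c
  simp [khatriRao]

end KhatriRao

end Matrix

open Complex

section RatCast

variable {l m n p : Type*}

lemma map_ratCast_mul [Fintype m] (P : Matrix l m ℚ) (Q : Matrix m n ℚ) :
    (P * Q).map ((↑·) : ℚ → ℂ) = P.map ((↑·) : ℚ → ℂ) * Q.map ((↑·) : ℚ → ℂ) :=
  Matrix.map_mul (f := Rat.castHom ℂ)

lemma map_ratCast_kronecker (P : Matrix l m ℚ) (Q : Matrix n p ℚ) :
    (P ⊗ₖ Q).map ((↑·) : ℚ → ℂ) = P.map ((↑·) : ℚ → ℂ) ⊗ₖ Q.map ((↑·) : ℚ → ℂ) := by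
  ext
  simp

end RatCast

section Irrep

def irrepFrame : Matrix (Fin 4) (Fin 2) ℂ := !![1, I; I, 1; -1, -I; -I, -1]

def irrepCoframe : Matrix (Fin 4) (Fin 2) ℂ := (4 : ℂ)⁻¹ • !![1, -I; -I, 1; -1, I; I, -1]

lemma irrepCoframe_transpose_mul_irrepFrame : irrepCoframeᵀ * irrepFrame = 1 := by
  ext i j
  fin_cases i <;> fin_cases j <;>
    simp [irrepFrame, irrepCoframe, mul_apply, Fin.sum_univ_four] <;> ring_nf <;> simp <;> ring

lemma xD_map_mul_irrepFrame :
    xD.map ((↑·) : ℚ → ℂ) * irrepFrame = irrepFrame * diagonal ![I, -I] := by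
  ext i j
  fin_cases i <;> fin_cases j <;> simp [xD, irrepFrame, mul_apply, Fin.sum_univ_four]

lemma yD_map_mul_irrepFrame :
    yD.map ((↑·) : ℚ → ℂ) * irrepFrame = irrepFrame * !![(0 : ℂ), 1; 1, 0] := by
  ext i j
  fin_cases i <;> fin_cases j <;> simp [yD, irrepFrame, mul_apply, Fin.sum_univ_four]

lemma mul_map_mul_irrepFrame {g h : Matrix (Fin 4) (Fin 4) ℚ} {P Q : Matrix (Fin 2) (Fin 2) ℂ}
    (hg : g.map ((↑·) : ℚ → ℂ) * irrepFrame = irrepFrame * P)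
    (hh : h.map ((↑·) : ℚ → ℂ) * irrepFrame = irrepFrame * Q) :
    (g * h).map ((↑·) : ℚ → ℂ) * irrepFrame = irrepFrame * (P * Q) := by
  rw [map_ratCast_mul, Matrix.mul_assoc, hh, ← Matrix.mul_assoc, hg, Matrix.mul_assoc]

lemma xD_pow_map_mul_irrepFrame (k : ℕ) :
    (xD ^ k).map ((↑·) : ℚ → ℂ) * irrepFrame = irrepFrame * diagonal (![I, -I] ^ k) := by
  rw [← diagonal_pow]
  induction k with
  | zero => simp
  | succ k ih =>
    rw [pow_succ, pow_succ]
    exact mul_map_mul_irrepFrame ih xD_map_mul_irrepFrame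

lemma xD_sq_map_mul_irrepFrame : (xD ^ 2).map ((↑·) : ℚ → ℂ) * irrepFrame = -irrepFrame := by
  rw [xD_pow_map_mul_irrepFrame]
  have : diagonal (![I, -I] ^ 2) = -1 := by
    ext i j
    fin_cases i <;> fin_cases j <;> simp
  rw [this, Matrix.mul_neg, Matrix.mul_one]

end Irrep

section Cone

/-- The factor `-1/m` is chosen so that `Â₁ - Â₂` acts on the columns by `!![0, -1; m, 0]`. -/
def coneFrame (m : ℕ) : Matrix (Fin 1 ⊕ Fin m) (Fin 2) ℚ :=
  fromRows (of fun _ => ![1, 0]) (of fun _ => ![0, -(m : ℚ)⁻¹])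

def coneCoframe (m : ℕ) : Matrix (Fin 1 ⊕ Fin m) (Fin 2) ℚ :=
  fromRows (of fun _ => ![1, 0]) (of fun _ => ![0, -1])

lemma coneCoframe_transpose_mul_coneFrame {m : ℕ} (hm : (m : ℚ) ≠ 0) :
    (coneCoframe m)ᵀ * coneFrame m = 1 := by
  ext i j
  fin_cases i <;> fin_cases j <;>
    simp [coneFrame, coneCoframe, mul_apply, Fintype.sum_sum_type, hm]

lemma Ahat1_sub_Ahat2_mul_coneFrame {n : ℕ} (A B : Matrix (Fin (n - 1)) (Fin (n - 1)) ℚ)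
    (hn : ((n - 1 : ℕ) : ℚ) ≠ 0) (hAB : ∀ i, ∑ j, A i j = ∑ j, B i j) :
    (Ahat1 A - Ahat2 B) * coneFrame (n - 1)
      = coneFrame (n - 1) * !![0, -1; ((n - 1 : ℕ) : ℚ), 0] := by
  ext (i | i) j
  all_goals fin_cases j
  all_goals simp [Ahat1, Ahat2, coneFrame, mul_apply, Fintype.sum_sum_type, hn,
    ← Finset.sum_mul, hAB]

end Cone

section Representation

def repFrame (m : ℕ) : Matrix ((Fin 1 ⊕ Fin m) × Fin 4) (Fin 2) ℂ :=
  khatriRao ((coneFrame m).map (↑·)) irrepFrame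

def repCoframe (m : ℕ) : Matrix (Fin 2) ((Fin 1 ⊕ Fin m) × Fin 4) ℂ :=
  (khatriRao ((coneCoframe m).map (↑·)) irrepCoframe)ᵀ

lemma repCoframe_mul_repFrame {m : ℕ} (hm : (m : ℚ) ≠ 0) : repCoframe m * repFrame m = 1 := by
  rw [repCoframe, repFrame, transpose_khatriRao_mul_khatriRao,
    irrepCoframe_transpose_mul_irrepFrame, ← transpose_map, ← map_ratCast_mul,
    coneCoframe_transpose_mul_coneFrame hm]
  simp [one_hadamard]

lemma sig_map_mul_repFrame (n : ℕ) {g : Matrix (Fin 4) (Fin 4) ℚ} {d : Fin 2 → ℂ}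
    (hg : g.map ((↑·) : ℚ → ℂ) * irrepFrame = irrepFrame * diagonal d) :
    (sig n g).map ((↑·) : ℚ → ℂ) * repFrame (n - 1) = repFrame (n - 1) * diagonal d := by
  rw [sig, map_ratCast_kronecker, repFrame, kronecker_mul_khatriRao, hg, khatriRao_mul_diagonal]
  simp

lemma tau_map_mul_repFrame {n : ℕ} (hn : ((n - 1 : ℕ) : ℚ) ≠ 0)
    (A : Matrix (Fin (n - 1)) (Fin (n - 1)) ℚ) (hA : ∀ i, ∑ j, A i j = ∑ j, Aᵀ i j)
    {g : Matrix (Fin 4) (Fin 4) ℚ} {Y : Matrix (Fin 2) (Fin 2) ℂ}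
    (hg : g.map ((↑·) : ℚ → ℂ) * irrepFrame = irrepFrame * Y) (hY : ∀ i, Y i i = 0) :
    (tau A g).map ((↑·) : ℚ → ℂ) * repFrame (n - 1)
      = repFrame (n - 1) * (!![0, -1; ((n - 1 : ℕ) : ℂ), 0] ⊙ Y) := by
  have hgx : (g * xD ^ 2).map ((↑·) : ℚ → ℂ) * irrepFrame = -(irrepFrame * Y) := by
    rw [map_ratCast_mul, Matrix.mul_assoc, xD_sq_map_mul_irrepFrame, Matrix.mul_neg, hg]
  have hR := congrArg (Matrix.map · ((↑·) : ℚ → ℂ)) (Ahat1_sub_Ahat2_mul_coneFrame A Aᵀ hn hA)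
  rw [Matrix.sub_mul, Matrix.map_sub _ (fun _ _ => Rat.cast_sub _ _), map_ratCast_mul,
    map_ratCast_mul, map_ratCast_mul] at hR
  have hRc : !![(0 : ℚ), -1; ((n - 1 : ℕ) : ℚ), 0].map ((↑·) : ℚ → ℂ)
      = !![0, -1; ((n - 1 : ℕ) : ℂ), 0] := by
    ext i j
    fin_cases i <;> fin_cases j <;> simp
  rw [hRc] at hR
  rw [tau, Matrix.map_add _ (fun _ _ => Rat.cast_add _ _), Matrix.add_mul, map_ratCast_kronecker,
    map_ratCast_kronecker, repFrame, kronecker_mul_khatriRao, kronecker_mul_khatriRao, hg, hgx, khatriRao_neg_right,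
    ← sub_eq_add_neg, khatriRao_sub_khatriRao, hR, khatriRao_mul_mul]
  intro c i j hij
  fin_cases c <;> fin_cases i <;> fin_cases j <;> simp_all

lemma tau_mul_yD_map_mul_repFrame {n : ℕ} (hn : ((n - 1 : ℕ) : ℚ) ≠ 0)
    (A : Matrix (Fin (n - 1)) (Fin (n - 1)) ℚ) (hA : ∀ i, ∑ j, A i j = ∑ j, Aᵀ i j)
    {g : Matrix (Fin 4) (Fin 4) ℚ} {d : Fin 2 → ℂ}
    (hg : g.map ((↑·) : ℚ → ℂ) * irrepFrame = irrepFrame * diagonal d) :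
    (tau A (g * yD)).map ((↑·) : ℚ → ℂ) * repFrame (n - 1)
      = repFrame (n - 1) * (!![0, -1; ((n - 1 : ℕ) : ℂ), 0] ⊙ (diagonal d * !![0, 1; 1, 0])) :=
  tau_map_mul_repFrame hn A hA (mul_map_mul_irrepFrame hg yD_map_mul_irrepFrame)
    (fun i => by fin_cases i <;> simp)

lemma sig_one_map_mul_repFrame (n : ℕ) :
    (sig n 1).map ((↑·) : ℚ → ℂ) * repFrame (n - 1)
      = repFrame (n - 1) * (1 : Matrix (Fin 2) (Fin 2) ℂ) := by
  have h := sig_map_mul_repFrame n (g := 1) (d := fun _ => 1) (by simp)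
  rwa [diagonal_one] at h

lemma sig_xD_map_mul_repFrame (n : ℕ) :
    (sig n xD).map ((↑·) : ℚ → ℂ) * repFrame (n - 1) = repFrame (n - 1) * !![I, 0; 0, -I] := by
  rw [← diagonal_vec2]
  exact sig_map_mul_repFrame n xD_map_mul_irrepFrame

lemma tau_yD_map_mul_repFrame {n : ℕ} (hn : ((n - 1 : ℕ) : ℚ) ≠ 0)
    (A : Matrix (Fin (n - 1)) (Fin (n - 1)) ℚ) (hA : ∀ i, ∑ j, A i j = ∑ j, Aᵀ i j) :
    (tau A yD).map ((↑·) : ℚ → ℂ) * repFrame (n - 1)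
      = repFrame (n - 1) * !![0, -1; ((n - 1 : ℕ) : ℂ), 0] := by
  have h := tau_map_mul_repFrame hn A hA yD_map_mul_irrepFrame (fun i => by fin_cases i <;> simp)
  rwa [show !![0, -1; ((n - 1 : ℕ) : ℂ), 0] ⊙ !![0, 1; 1, 0] = !![0, -1; ((n - 1 : ℕ) : ℂ), 0] by
    ext i j; fin_cases i <;> fin_cases j <;> simp] at h

lemma generators_subset_compressionSubalgebra {n : ℕ} (hn : ((n - 1 : ℕ) : ℚ) ≠ 0)
    (A : Matrix (Fin (n - 1)) (Fin (n - 1)) ℚ) (hA : ∀ i, ∑ j, A i j = ∑ j, Aᵀ i j) :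
    {(sig n 1).map ((↑·) : ℚ → ℂ), (sig n xD).map ((↑·) : ℚ → ℂ),
      (sig n (xD ^ 2)).map ((↑·) : ℚ → ℂ), (sig n (xD ^ 3)).map ((↑·) : ℚ → ℂ),
      (tau A yD).map ((↑·) : ℚ → ℂ), (tau A (xD * yD)).map ((↑·) : ℚ → ℂ),
      (tau A (xD ^ 2 * yD)).map ((↑·) : ℚ → ℂ), (tau A (xD ^ 3 * yD)).map ((↑·) : ℚ → ℂ)}
      ⊆ (compressionSubalgebra (repFrame (n - 1)) (repCoframe (n - 1))
        (repCoframe_mul_repFrame hn) : Set _) := by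
  intro M hM
  simp only [Set.mem_insert_iff, Set.mem_singleton_iff] at hM
  rcases hM with rfl | rfl | rfl | rfl | rfl | rfl | rfl | rfl <;>
    apply mem_compressionSubalgebra_of_mul_eq
  exacts [sig_one_map_mul_repFrame n, sig_xD_map_mul_repFrame n,
    sig_map_mul_repFrame n (xD_pow_map_mul_irrepFrame 2),
    sig_map_mul_repFrame n (xD_pow_map_mul_irrepFrame 3), tau_yD_map_mul_repFrame hn A hA,
    tau_mul_yD_map_mul_repFrame hn A hA xD_map_mul_irrepFrame,
    tau_mul_yD_map_mul_repFrame hn A hA (xD_pow_map_mul_irrepFrame 2),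
    tau_mul_yD_map_mul_repFrame hn A hA (xD_pow_map_mul_irrepFrame 3)]

end Representation

lemma sum_eq_sum_transpose_of_add_transpose {m : ℕ} (A : Matrix (Fin m) (Fin m) ℚ) {b : ℚ}
    (hsum : A + Aᵀ = of (fun _ _ => 1) - 1) (hrow : ∀ i, ∑ j, A i j = b) (hb : 2 * b = m - 1)
    (i : Fin m) : ∑ j, A i j = ∑ j, Aᵀ i j := by
  have hi := congrArg (fun M : Matrix (Fin m) (Fin m) ℚ => ∑ j, M i j) hsum
  simp only [Matrix.add_apply, Matrix.sub_apply, of_apply, one_apply, Finset.sum_add_distrib,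
    Finset.sum_sub_distrib, hrow] at hi
  simp only [Finset.sum_const, Finset.card_univ, Fintype.card_fin, nsmul_eq_mul, mul_one,
    Finset.sum_ite_eq, Finset.mem_univ, if_true] at hi
  rw [hrow]
  linarith

lemma AlgHom.surjective_of_adjoin_eq_top {R A B : Type*} [CommSemiring R] [Semiring A]
    [Semiring B] [Algebra R A] [Algebra R B] {f : A →ₐ[R] B} {s : Set B}
    (hs : Algebra.adjoin R s = ⊤) (hsf : s ⊆ f.range) : Function.Surjective f :=
  (AlgHom.range_eq_top f).1 (eq_top_iff.2 (hs ▸ Algebra.adjoin_le hsf))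

lemma adjoin_diagonal_I_antidiagonal_eq_top {c : ℂ} (hc : c ≠ 0) :
    Algebra.adjoin ℂ {!![I, 0; 0, -I], !![0, -1; c, 0]}
      = (⊤ : Subalgebra ℂ (Matrix (Fin 2) (Fin 2) ℂ)) := by
  set X : Matrix (Fin 2) (Fin 2) ℂ := !![I, 0; 0, -I]
  set Y : Matrix (Fin 2) (Fin 2) ℂ := !![0, -1; c, 0]
  have hX : X ∈ Algebra.adjoin ℂ {X, Y} := Algebra.subset_adjoin (by simp)
  have hY : Y ∈ Algebra.adjoin ℂ {X, Y} := Algebra.subset_adjoin (by simp)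
  set P : Matrix (Fin 2) (Fin 2) ℂ := (2⁻¹ : ℂ) • (1 - I • X)
  have hP_eq : P = !![1, 0; 0, 0] := by
    ext i j
    fin_cases i <;> fin_cases j <;> norm_num [P, X]
  have hP : P ∈ Algebra.adjoin ℂ {X, Y} :=
    Subalgebra.smul_mem _ (sub_mem (one_mem _) (Subalgebra.smul_mem _ hX _)) _
  rw [eq_top_iff]
  rintro M -
  have hM : M = M 0 0 • P - M 0 1 • (P * Y) + (M 1 0 * c⁻¹) • (Y * P) + M 1 1 • (1 - P) := by
    rw [hP_eq]
    ext i j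
    fin_cases i <;> fin_cases j <;> simp [Y, hc]
  rw [hM]
  exact add_mem (add_mem (sub_mem (Subalgebra.smul_mem _ hP _)
    (Subalgebra.smul_mem _ (mul_mem hP hY) _)) (Subalgebra.smul_mem _ (mul_mem hY hP) _))
    (Subalgebra.smul_mem _ (sub_mem (one_mem _) hP) _)

end

theorem stmt_17_general (n : ℕ) (hn : 4 ≤ n) (a b : ℚ)
    (ha : a = (n : ℚ) - 1) (hb : b = ((n : ℚ) - 2) / 2)
    (A₁ : Matrix (Fin (n - 1)) (Fin (n - 1)) ℚ)
    (hsum : A₁ + A₁ᵀ = (Matrix.of fun _ _ => (1 : ℚ)) - 1)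
    (hrow : ∀ i, ∑ j, A₁ i j = b) :
    ∀ S : Set (Matrix ((Fin 1 ⊕ Fin (n - 1)) × Fin 4) ((Fin 1 ⊕ Fin (n - 1)) × Fin 4) ℂ),
      S = {(sig n 1).map ((↑·) : ℚ → ℂ), (sig n xD).map ((↑·) : ℚ → ℂ),
        (sig n (xD ^ 2)).map ((↑·) : ℚ → ℂ), (sig n (xD ^ 3)).map ((↑·) : ℚ → ℂ),
        (tau A₁ yD).map ((↑·) : ℚ → ℂ), (tau A₁ (xD * yD)).map ((↑·) : ℚ → ℂ),
        (tau A₁ (xD ^ 2 * yD)).map ((↑·) : ℚ → ℂ), (tau A₁ (xD ^ 3 * yD)).map ((↑·) : ℚ → ℂ)} →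
      ∃ T : Algebra.adjoin ℂ S →ₐ[ℂ] Matrix (Fin 2) (Fin 2) ℂ,
        Function.Surjective T ∧
        (∀ u : Algebra.adjoin ℂ S, (u : Matrix ((Fin 1 ⊕ Fin (n - 1)) × Fin 4) ((Fin 1 ⊕ Fin (n - 1)) × Fin 4) ℂ) = (sig n 1).map ((↑·) : ℚ → ℂ) → T u = 1) ∧
        (∀ u : Algebra.adjoin ℂ S, (u : Matrix ((Fin 1 ⊕ Fin (n - 1)) × Fin 4) ((Fin 1 ⊕ Fin (n - 1)) × Fin 4) ℂ) = (sig n xD).map ((↑·) : ℚ → ℂ) →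
          T u = !![Complex.I, 0; 0, -Complex.I]) ∧
        (∀ u : Algebra.adjoin ℂ S, (u : Matrix ((Fin 1 ⊕ Fin (n - 1)) × Fin 4) ((Fin 1 ⊕ Fin (n - 1)) × Fin 4) ℂ) = (tau A₁ yD).map ((↑·) : ℚ → ℂ) →
          T u = !![0, -1; (a : ℂ), 0]) := by
  rintro S rfl
  have hm : ((n - 1 : ℕ) : ℚ) ≠ 0 := Nat.cast_ne_zero.2 (by omega)
  have hma : ((n - 1 : ℕ) : ℂ) = a := by
    rw [ha, Nat.cast_sub (by omega : 1 ≤ n)]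
    push_cast
    rfl
  have hA := sum_eq_sum_transpose_of_add_transpose A₁ hsum hrow (by
    rw [hb, Nat.cast_sub (by omega : 1 ≤ n)]
    push_cast
    ring)
  have hWV := repCoframe_mul_repFrame hm
  have hx := sig_xD_map_mul_repFrame n
  have hy := tau_yD_map_mul_repFrame hm A₁ hA
  rw [hma] at hy
  let T := (compressionHom _ _ hWV).comp
    (Subalgebra.inclusion (Algebra.adjoin_le (generators_subset_compressionSubalgebra hm A₁ hA)))
  have hT {M ρ} (h : M * repFrame (n - 1) = repFrame (n - 1) * ρ) (u : Algebra.adjoin ℂ _)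
      (hu : (u : Matrix _ _ ℂ) = M) : T u = ρ := by
    subst hu
    exact mul_mul_eq_of_mul_eq hWV h
  refine ⟨T, AlgHom.surjective_of_adjoin_eq_top
    (adjoin_diagonal_I_antidiagonal_eq_top (hma ▸ Nat.cast_ne_zero.2 (by omega))) ?_,
    hT (sig_one_map_mul_repFrame n), hT hx, hT hy⟩
  rintro _ (rfl | rfl)
  exacts [⟨⟨(sig n xD).map (↑·), Algebra.subset_adjoin (by simp)⟩, hT hx _ rfl⟩,
    ⟨⟨(tau A₁ yD).map (↑·), Algebra.subset_adjoin (by simp)⟩, hT hy _ rfl⟩]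

theorem stmt_17 (n : ℕ) (hn : 4 ≤ n) (a b : ℚ)
    (ha : a = (n : ℚ) - 1) (hb : b = ((n : ℚ) - 2) / 2)
    (A₁ : Matrix (Fin (n - 1)) (Fin (n - 1)) ℚ)
    (h01 : ∀ i j, A₁ i j = 0 ∨ A₁ i j = 1)
    (hdiag : ∀ i, A₁ i i = 0)
    (hns : A₁ ≠ A₁ᵀ)
    (hsum : A₁ + A₁ᵀ = (Matrix.of fun _ _ => (1 : ℚ)) - 1)
    (hrow : ∀ i, ∑ j, A₁ i j = b)
    (h11 : A₁ * A₁ = ((b - 1) / 2) • A₁ + ((b + 1) / 2) • A₁ᵀ)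
    (h22 : A₁ᵀ * A₁ᵀ = ((b + 1) / 2) • A₁ + ((b - 1) / 2) • A₁ᵀ)
    (h12 : A₁ * A₁ᵀ = b • (1 : Matrix (Fin (n - 1)) (Fin (n - 1)) ℚ)
      + ((b - 1) / 2) • A₁ + ((b - 1) / 2) • A₁ᵀ)
    (h21 : A₁ᵀ * A₁ = b • (1 : Matrix (Fin (n - 1)) (Fin (n - 1)) ℚ)
      + ((b - 1) / 2) • A₁ + ((b - 1) / 2) • A₁ᵀ) :
    ∀ S : Set (Matrix ((Fin 1 ⊕ Fin (n - 1)) × Fin 4) ((Fin 1 ⊕ Fin (n - 1)) × Fin 4) ℂ),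
      S = {(sig n 1).map ((↑·) : ℚ → ℂ), (sig n xD).map ((↑·) : ℚ → ℂ),
        (sig n (xD ^ 2)).map ((↑·) : ℚ → ℂ), (sig n (xD ^ 3)).map ((↑·) : ℚ → ℂ),
        (tau A₁ yD).map ((↑·) : ℚ → ℂ), (tau A₁ (xD * yD)).map ((↑·) : ℚ → ℂ),
        (tau A₁ (xD ^ 2 * yD)).map ((↑·) : ℚ → ℂ), (tau A₁ (xD ^ 3 * yD)).map ((↑·) : ℚ → ℂ)} →
      ∃ T : Algebra.adjoin ℂ S →ₐ[ℂ] Matrix (Fin 2) (Fin 2) ℂ,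
        Function.Surjective T ∧
        (∀ u : Algebra.adjoin ℂ S, (u : Matrix ((Fin 1 ⊕ Fin (n - 1)) × Fin 4) ((Fin 1 ⊕ Fin (n - 1)) × Fin 4) ℂ) = (sig n 1).map ((↑·) : ℚ → ℂ) → T u = 1) ∧
        (∀ u : Algebra.adjoin ℂ S, (u : Matrix ((Fin 1 ⊕ Fin (n - 1)) × Fin 4) ((Fin 1 ⊕ Fin (n - 1)) × Fin 4) ℂ) = (sig n xD).map ((↑·) : ℚ → ℂ) →
          T u = !![Complex.I, 0; 0, -Complex.I]) ∧
        (∀ u : Algebra.adjoin ℂ S, (u : Matrix ((Fin 1 ⊕ Fin (n - 1)) × Fin 4) ((Fin 1 ⊕ Fin (n - 1)) × Fin 4) ℂ) = (tau A₁ yD).map ((↑·) : ℚ → ℂ) →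
          T u = !![0, -1; (a : ℂ), 0]) :=
  stmt_17_general n hn a b ha hb A₁ hsum hrow
end
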